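/- Let n ≥ 1, let 0 < C ≤ 1, and let h : ℝⁿ → ℝ be a bounded measurable function with h(x) = 0 whenever |x₁| > C. Then Σ_{α ∈ ℕⁿ, |α| = 3} (1/α!)·(∫ h·He_α dγ)² ≤ (∫ h² dγ)·(2Φ(C) − 1). -/

import Mathlib

open MeasureTheory ProbabilityTheory Real Filter
open scoped NNReal ENNReal

/-- The standard Gaussian density `φ(x) = (1/√(2π)) e^{-x²/2}`. -/
noncomputable def gphi (x : ℝ) : ℝ := (Real.sqrt (2 * Real.pi))⁻¹ * Real.exp (-(x ^ 2) / 2)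

/-- The standard Gaussian CDF `Φ(x) = ∫_{-∞}^x φ(t) dt`. -/
noncomputable def gPhi (x : ℝ) : ℝ := ∫ t in Set.Iic x, gphi t

/-- The standard Gaussian measure on `ℝ^{n+1}`. -/
noncomputable def gauss (n : ℕ) : Measure (Fin (n + 1) → ℝ) :=
  Measure.pi fun _ => ProbabilityTheory.gaussianReal 0 1

/-- The multivariate probabilists' Hermite polynomial `He_α(x) = ∏ᵢ He_{αᵢ}(xᵢ)`. -/
noncomputable def hermiteProd {m : ℕ} (α : Fin m → ℕ) (x : Fin m → ℝ) : ℝ :=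
  ∏ i, Polynomial.aeval (x i) (Polynomial.hermite (α i))

/-- The factorial of a multi-index, `α! = ∏ᵢ αᵢ!`. -/
def mfact {m : ℕ} (α : Fin m → ℕ) : ℕ := ∏ i, Nat.factorial (α i)

/-- A Davie–Reeds strip pair in direction `x₁`, up to a `γ`-null set. -/
def StripPair (n : ℕ) (Cstar : ℝ) (f g : (Fin (n + 1) → ℝ) → ℝ) : Prop :=
  ∀ᵐ x ∂(gauss n),
    (Cstar ≤ x 0 → f x = 1 ∧ g x = 1) ∧
    (x 0 ≤ -Cstar → f x = -1 ∧ g x = -1) ∧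
    (|x 0| < Cstar → g x = -f x)

lemma gphi_nonneg (x : ℝ) : 0 ≤ gphi x := by unfold gphi; positivity

lemma gphi_meas : Measurable gphi := by unfold gphi; fun_prop

lemma gaussianPDFReal_eq_gphi : gaussianPDFReal 0 1 = gphi := by
  ext x
  simp [gaussianPDFReal, gphi]

lemma gaussianReal_eq : gaussianReal 0 1 = volume.withDensity (fun x => ENNReal.ofReal (gphi x)) := by
  rw [gaussianReal_of_var_ne_zero _ one_ne_zero]
  congr 1
  ext x
  rw [gaussianPDF, gaussianPDFReal_eq_gphi]

lemma integral_gaussianReal_eq (f : ℝ → ℝ) :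
    ∫ x, f x ∂(gaussianReal 0 1) = ∫ x, gphi x * f x := by
  rw [gaussianReal_eq]
  have h1 : (fun x => ENNReal.ofReal (gphi x)) = (fun x => ((Real.toNNReal (gphi x) : ℝ≥0) : ℝ≥0∞)) := rfl
  rw [h1, integral_withDensity_eq_integral_smul (gphi_meas.real_toNNReal)]
  congr 1; ext x
  simp [NNReal.smul_def, Real.coe_toNNReal _ (gphi_nonneg x)]

lemma integrable_gaussianReal_iff (f : ℝ → ℝ) :
    Integrable f (gaussianReal 0 1) ↔ Integrable (fun x => f x * gphi x) := by
  rw [gaussianReal_eq]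
  rw [integrable_withDensity_iff gphi_meas.ennreal_ofReal
    (by filter_upwards with x using ENNReal.ofReal_lt_top)]
  constructor <;> (intro hh; apply hh.congr; filter_upwards with x; rw [ENNReal.toReal_ofReal (gphi_nonneg x)])

lemma integrable_pow_gaussfn (m : ℕ) :
    Integrable (fun x : ℝ => x ^ m * Real.exp (-(x ^ 2) / 2)) := by
  have hm : (-1:ℝ) < (m:ℝ) := by
    have : (0:ℝ) ≤ m := Nat.cast_nonneg m
    linarith
  have h := integrable_rpow_mul_exp_neg_mul_sq (b := 1/2) (by norm_num) (s := (m : ℝ)) hm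
  simp only [Real.rpow_natCast] at h
  apply h.congr
  filter_upwards with x
  ring_nf

lemma tendsto_pow_gaussfn_atTop (k : ℕ) :
    Tendsto (fun x : ℝ => x ^ k * Real.exp (-(x ^ 2) / 2)) atTop (nhds 0) := by
  apply tendsto_of_tendsto_of_tendsto_of_le_of_le' tendsto_const_nhds
    (tendsto_pow_mul_exp_neg_atTop_nhds_zero k)
  · filter_upwards [eventually_ge_atTop (0:ℝ)] with x hx
    positivity
  · filter_upwards [eventually_ge_atTop (2:ℝ)] with x hx
    have h1 : -(x^2)/2 ≤ -x := by nlinarith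
    have h2 : (0:ℝ) ≤ x ^ k := by positivity
    exact mul_le_mul_of_nonneg_left (Real.exp_le_exp.2 h1) h2

lemma tendsto_pow_gaussfn_atBot (k : ℕ) :
    Tendsto (fun x : ℝ => x ^ k * Real.exp (-(x ^ 2) / 2)) atBot (nhds 0) := by
  have h : Tendsto (fun x : ℝ => (-1:ℝ)^k * (x ^ k * Real.exp (-(x ^ 2) / 2))) atTop (nhds 0) := by
    simpa using (tendsto_pow_gaussfn_atTop k).const_mul ((-1:ℝ)^k)
  have h2 := h.comp tendsto_neg_atBot_atTop
  apply h2.congr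
  intro x
  simp only [Function.comp]
  rw [mul_comm, mul_assoc, mul_comm (rexp _), ← mul_assoc, ← mul_pow, neg_mul_neg, mul_one, neg_sq]

lemma gaussfn_moment_rec (m : ℕ) :
    ∫ x : ℝ, x ^ (m + 2) * Real.exp (-(x ^ 2) / 2)
      = (m + 1 : ℝ) * ∫ x : ℝ, x ^ m * Real.exp (-(x ^ 2) / 2) := by
  set F : ℝ → ℝ := fun x => x ^ (m + 1) * Real.exp (-(x ^ 2) / 2) with hF
  set f' : ℝ → ℝ := fun x =>
    (m + 1 : ℝ) * x ^ m * Real.exp (-(x ^ 2) / 2) - x ^ (m + 2) * Real.exp (-(x ^ 2) / 2) with hf'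
  have hderiv : ∀ x : ℝ, HasDerivAt F (f' x) x := by
    intro x
    have h1 : HasDerivAt (fun x : ℝ => x ^ (m + 1)) ((m + 1 : ℝ) * x ^ m) x := by
      simpa using hasDerivAt_pow (m + 1) x
    have h3 : HasDerivAt (fun x : ℝ => -(x ^ 2) / 2) (-x) x := by
      have := (hasDerivAt_pow 2 x).neg.div_const 2
      apply this.congr_deriv
      push_cast
      ring
    have h2 : HasDerivAt (fun x : ℝ => Real.exp (-(x ^ 2) / 2)) (-x * Real.exp (-(x ^ 2) / 2)) x := by
      have := h3.exp
      apply this.congr_deriv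
      ring
    have := h1.mul h2
    apply this.congr_deriv
    simp only [hf']
    ring
  have hintm := integrable_pow_gaussfn m
  have hintm2 := integrable_pow_gaussfn (m + 2)
  have hint : Integrable f' := by
    apply ((hintm.const_mul ((m:ℝ)+1)).sub hintm2).congr
    filter_upwards with x
    simp only [hf', Pi.sub_apply]
    ring
  have hTop : Tendsto F atTop (nhds 0) := tendsto_pow_gaussfn_atTop (m+1)
  have hBot : Tendsto F atBot (nhds 0) := tendsto_pow_gaussfn_atBot (m+1)
  have hIoi : ∫ x in Set.Ioi (0:ℝ), f' x = 0 - F 0 :=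
    integral_Ioi_of_hasDerivAt_of_tendsto (hderiv 0).continuousAt.continuousWithinAt
      (fun x _ => hderiv x) hint.integrableOn hTop
  have hIic : ∫ x in Set.Iic (0:ℝ), f' x = F 0 - 0 :=
    integral_Iic_of_hasDerivAt_of_tendsto (hderiv 0).continuousAt.continuousWithinAt
      (fun x _ => hderiv x) hint.integrableOn hBot
  have htot : ∫ x : ℝ, f' x = 0 := by
    rw [← intervalIntegral.integral_Iic_add_Ioi (b := (0:ℝ)) hint.integrableOn hint.integrableOn,
      hIoi, hIic]
    ring
  have hsplit : ∫ x : ℝ, f' x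
      = (m + 1 : ℝ) * (∫ x : ℝ, x ^ m * Real.exp (-(x ^ 2) / 2))
        - ∫ x : ℝ, x ^ (m + 2) * Real.exp (-(x ^ 2) / 2) := by
    have e1 : ∫ x : ℝ, f' x = ∫ x : ℝ,
        (((m:ℝ) + 1) * (x ^ m * Real.exp (-(x ^ 2) / 2)) - x ^ (m + 2) * Real.exp (-(x ^ 2) / 2)) := by
      congr 1; ext x; simp only [hf']; ring
    rw [e1, integral_sub (hintm.const_mul _) hintm2, integral_const_mul]
  linarith [htot, hsplit]

lemma sqrt2pi_pos : 0 < Real.sqrt (2 * π) := Real.sqrt_pos.2 (by positivity)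

lemma gaussfn_int : ∫ x : ℝ, Real.exp (-(x ^ 2) / 2) = Real.sqrt (2 * π) := by
  have h := integral_gaussian (1/2)
  rw [show π / (1/2) = 2 * π by ring] at h
  rw [← h]
  congr 1; ext x; ring_nf

noncomputable def mom (m : ℕ) : ℝ := ∫ x, x ^ m ∂(gaussianReal 0 1)

lemma mom_eq (m : ℕ) :
    mom m = (Real.sqrt (2 * π))⁻¹ * ∫ x : ℝ, x ^ m * Real.exp (-(x ^ 2) / 2) := by
  rw [mom, integral_gaussianReal_eq, ← integral_const_mul]
  congr 1; ext x; rw [gphi]; ring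

lemma gaussfn_odd (m : ℕ) : ∫ x : ℝ, x ^ (2 * m + 1) * Real.exp (-(x ^ 2) / 2) = 0 := by
  have h := integral_neg_eq_self (fun x : ℝ => x ^ (2 * m + 1) * Real.exp (-(x ^ 2) / 2)) volume
  have h2 : (∫ x : ℝ, (-x) ^ (2 * m + 1) * Real.exp (-((-x) ^ 2) / 2))
      = - ∫ x : ℝ, x ^ (2 * m + 1) * Real.exp (-(x ^ 2) / 2) := by
    rw [← integral_neg]
    congr 1; ext x
    rw [Odd.neg_pow (odd_two_mul_add_one m), neg_sq]
    ring
  rw [h2] at h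
  linarith

lemma mom_zero : mom 0 = 1 := by
  rw [mom_eq]
  simp only [pow_zero, one_mul, gaussfn_int]
  exact inv_mul_cancel₀ (ne_of_gt sqrt2pi_pos)

lemma mom_one : mom 1 = 0 := by
  have h := gaussfn_odd 0
  simp only [mul_zero, zero_add] at h
  rw [mom_eq, h, mul_zero]

lemma mom_two : mom 2 = 1 := by
  rw [mom_eq, show (2:ℕ) = 0+2 from rfl, gaussfn_moment_rec]
  simp only [pow_zero, one_mul, gaussfn_int, Nat.cast_zero]
  rw [← mul_assoc]
  rw [show ((0:ℝ)+1) = 1 by ring, mul_one, inv_mul_cancel₀ (ne_of_gt sqrt2pi_pos)]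

lemma mom_three : mom 3 = 0 := by
  rw [mom_eq, show (3:ℕ) = 2*1+1 from rfl, gaussfn_odd, mul_zero]

lemma mom_four : mom 4 = 3 := by
  have h2 := gaussfn_moment_rec 2
  have h0 := gaussfn_moment_rec 0
  simp only [zero_add] at h0
  rw [mom_eq, show (4:ℕ) = 2+2 from rfl, h2, h0]
  simp only [pow_zero, one_mul, gaussfn_int, Nat.cast_zero, Nat.cast_ofNat]
  field_simp
  ring

lemma mom_five : mom 5 = 0 := by
  rw [mom_eq, show (5:ℕ) = 2*2+1 from rfl, gaussfn_odd, mul_zero]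

lemma mom_six : mom 6 = 15 := by
  have h4 := gaussfn_moment_rec 4
  have h2 := gaussfn_moment_rec 2
  have h0 := gaussfn_moment_rec 0
  rw [mom_eq, show (6:ℕ) = 4+2 from rfl, h4, show (4:ℕ) = 2+2 from rfl, h2,
    show (2:ℕ) = 0+2 from rfl, h0]
  simp only [pow_zero, one_mul, gaussfn_int, Nat.cast_zero, Nat.cast_ofNat]
  field_simp
  ring

lemma integrable_pow_mu1 (m : ℕ) : Integrable (fun x : ℝ => x ^ m) (gaussianReal 0 1) := by
  rw [integrable_gaussianReal_iff]
  apply ((integrable_pow_gaussfn m).const_mul ((Real.sqrt (2 * π))⁻¹)).congr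
  filter_upwards with x
  rw [gphi]; ring

lemma integrable_poly_mu1 (f : ℝ → ℝ) (c0 c1 c2 c3 c4 c5 c6 : ℝ)
    (hf : ∀ x, f x = c0 + c1*x + c2*x^2 + c3*x^3 + c4*x^4 + c5*x^5 + c6*x^6) :
    Integrable f (gaussianReal 0 1) := by
  have I : ∀ (c : ℝ) (k : ℕ), Integrable (fun x : ℝ => c * x ^ k) (gaussianReal 0 1) :=
    fun c k => (integrable_pow_mu1 k).const_mul c
  have IA : ∀ (g1 g2 : ℝ → ℝ), Integrable g1 (gaussianReal 0 1) → Integrable g2 (gaussianReal 0 1)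
      → Integrable (fun x => g1 x + g2 x) (gaussianReal 0 1) := fun g1 g2 h1 h2 => h1.add h2
  have h := IA _ _ (IA _ _ (IA _ _ (IA _ _ (IA _ _ (IA _ _ (I c0 0) (I c1 1)) (I c2 2)) (I c3 3))
      (I c4 4)) (I c5 5)) (I c6 6)
  apply h.congr
  filter_upwards with x
  rw [hf]; ring

lemma integral_poly_mu1 (f : ℝ → ℝ) (c0 c1 c2 c3 c4 c5 c6 : ℝ)
    (hf : ∀ x, f x = c0 + c1*x + c2*x^2 + c3*x^3 + c4*x^4 + c5*x^5 + c6*x^6) :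
    ∫ x, f x ∂(gaussianReal 0 1) = c0 + c2 + 3*c4 + 15*c6 := by
  have I : ∀ (c : ℝ) (k : ℕ), Integrable (fun x : ℝ => c * x ^ k) (gaussianReal 0 1) :=
    fun c k => (integrable_pow_mu1 k).const_mul c
  have IA : ∀ (g1 g2 : ℝ → ℝ), Integrable g1 (gaussianReal 0 1) → Integrable g2 (gaussianReal 0 1)
      → Integrable (fun x => g1 x + g2 x) (gaussianReal 0 1) := fun g1 g2 h1 h2 => h1.add h2
  have h1 := IA _ _ (I c0 0) (I c1 1)
  have h2 := IA _ _ h1 (I c2 2)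
  have h3 := IA _ _ h2 (I c3 3)
  have h4 := IA _ _ h3 (I c4 4)
  have h5 := IA _ _ h4 (I c5 5)
  have e1 : ∫ x, f x ∂(gaussianReal 0 1)
      = ∫ x, (c0*x^0 + c1*x^1 + c2*x^2 + c3*x^3 + c4*x^4 + c5*x^5 + c6*x^6) ∂(gaussianReal 0 1) := by
    congr 1; ext x; rw [hf]; ring
  rw [e1, integral_add h5 (I c6 6), integral_add h4 (I c5 5), integral_add h3 (I c4 4),
    integral_add h2 (I c3 3), integral_add h1 (I c2 2), integral_add (I c0 0) (I c1 1)]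
  simp only [integral_const_mul]
  have m0 := mom_zero; have m1 := mom_one; have m2 := mom_two; have m3 := mom_three
  have m4 := mom_four; have m5 := mom_five; have m6 := mom_six
  rw [mom] at m0 m1 m2 m3 m4 m5 m6
  rw [m0, m1, m2, m3, m4, m5, m6]
  ring

lemma hermite_two' : Polynomial.hermite 2 = Polynomial.X^2 - 1 := by
  rw [show (2:ℕ) = 1+1 from rfl, Polynomial.hermite_succ]
  simp [Polynomial.hermite_succ]
  ring

lemma hermite_three' : Polynomial.hermite 3 = Polynomial.X^3 - 3*Polynomial.X := by
  rw [show (3:ℕ) = 2+1 from rfl, Polynomial.hermite_succ, hermite_two']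
  simp
  ring

lemma he_eval0 (t : ℝ) : Polynomial.aeval t (Polynomial.hermite 0) = 1 := by
  simp [Polynomial.hermite]
lemma he_eval1 (t : ℝ) : Polynomial.aeval t (Polynomial.hermite 1) = t := by
  simp [show Polynomial.hermite 1 = Polynomial.X by simp [Polynomial.hermite_succ]]
lemma he_eval2 (t : ℝ) : Polynomial.aeval t (Polynomial.hermite 2) = t^2 - 1 := by
  simp [hermite_two']; ring
lemma he_eval3 (t : ℝ) : Polynomial.aeval t (Polynomial.hermite 3) = t^3 - 3*t := by
  simp [hermite_three']; ring

/-- Orthogonality of low-degree Hermite polynomials for the standard Gaussian. -/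
lemma he_mul_he_integral {j k : ℕ} (hj : j ≤ 3) (hk : k ≤ 3) :
    ∫ t, (Polynomial.aeval t (Polynomial.hermite j) * Polynomial.aeval t (Polynomial.hermite k) : ℝ)
        ∂(gaussianReal 0 1)
      = if j = k then (Nat.factorial j : ℝ) else 0 := by
  interval_cases j <;> interval_cases k
  · rw [integral_poly_mu1 _ 1 0 0 0 0 0 0 (fun t => by rw [he_eval0]; ring)]; norm_num [Nat.factorial]
  · rw [integral_poly_mu1 _ 0 1 0 0 0 0 0 (fun t => by rw [he_eval0, he_eval1]; ring)]; norm_num [Nat.factorial]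
  · rw [integral_poly_mu1 _ (-1) 0 1 0 0 0 0 (fun t => by rw [he_eval0, he_eval2]; ring)]; norm_num [Nat.factorial]
  · rw [integral_poly_mu1 _ 0 (-3) 0 1 0 0 0 (fun t => by rw [he_eval0, he_eval3]; ring)]; norm_num [Nat.factorial]
  · rw [integral_poly_mu1 _ 0 1 0 0 0 0 0 (fun t => by rw [he_eval0, he_eval1]; ring)]; norm_num [Nat.factorial]
  · rw [integral_poly_mu1 _ 0 0 1 0 0 0 0 (fun t => by rw [he_eval1]; ring)]; norm_num [Nat.factorial]
  · rw [integral_poly_mu1 _ 0 (-1) 0 1 0 0 0 (fun t => by rw [he_eval1, he_eval2]; ring)]; norm_num [Nat.factorial]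
  · rw [integral_poly_mu1 _ 0 0 (-3) 0 1 0 0 (fun t => by rw [he_eval1, he_eval3]; ring)]; norm_num [Nat.factorial]
  · rw [integral_poly_mu1 _ (-1) 0 1 0 0 0 0 (fun t => by rw [he_eval0, he_eval2]; ring)]; norm_num [Nat.factorial]
  · rw [integral_poly_mu1 _ 0 (-1) 0 1 0 0 0 (fun t => by rw [he_eval1, he_eval2]; ring)]; norm_num [Nat.factorial]
  · rw [integral_poly_mu1 _ 1 0 (-2) 0 1 0 0 (fun t => by rw [he_eval2]; ring)]; norm_num [Nat.factorial]
  · rw [integral_poly_mu1 _ 0 3 0 (-4) 0 1 0 (fun t => by rw [he_eval2, he_eval3]; ring)]; norm_num [Nat.factorial]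
  · rw [integral_poly_mu1 _ 0 (-3) 0 1 0 0 0 (fun t => by rw [he_eval0, he_eval3]; ring)]; norm_num [Nat.factorial]
  · rw [integral_poly_mu1 _ 0 0 (-3) 0 1 0 0 (fun t => by rw [he_eval1, he_eval3]; ring)]; norm_num [Nat.factorial]
  · rw [integral_poly_mu1 _ 0 3 0 (-4) 0 1 0 (fun t => by rw [he_eval2, he_eval3]; ring)]; norm_num [Nat.factorial]
  · rw [integral_poly_mu1 _ 0 0 9 0 (-6) 0 1 (fun t => by rw [he_eval3]; ring)]; norm_num [Nat.factorial]

lemma he_mul_he_integrable {j k : ℕ} (hj : j ≤ 3) (hk : k ≤ 3) :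
    Integrable (fun t : ℝ =>
      (Polynomial.aeval t (Polynomial.hermite j) * Polynomial.aeval t (Polynomial.hermite k) : ℝ))
      (gaussianReal 0 1) := by
  interval_cases j <;> interval_cases k
  · exact integrable_poly_mu1 _ 1 0 0 0 0 0 0 (fun t => by rw [he_eval0]; ring)
  · exact integrable_poly_mu1 _ 0 1 0 0 0 0 0 (fun t => by rw [he_eval0, he_eval1]; ring)
  · exact integrable_poly_mu1 _ (-1) 0 1 0 0 0 0 (fun t => by rw [he_eval0, he_eval2]; ring)
  · exact integrable_poly_mu1 _ 0 (-3) 0 1 0 0 0 (fun t => by rw [he_eval0, he_eval3]; ring)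
  · exact integrable_poly_mu1 _ 0 1 0 0 0 0 0 (fun t => by rw [he_eval0, he_eval1]; ring)
  · exact integrable_poly_mu1 _ 0 0 1 0 0 0 0 (fun t => by rw [he_eval1]; ring)
  · exact integrable_poly_mu1 _ 0 (-1) 0 1 0 0 0 (fun t => by rw [he_eval1, he_eval2]; ring)
  · exact integrable_poly_mu1 _ 0 0 (-3) 0 1 0 0 (fun t => by rw [he_eval1, he_eval3]; ring)
  · exact integrable_poly_mu1 _ (-1) 0 1 0 0 0 0 (fun t => by rw [he_eval0, he_eval2]; ring)
  · exact integrable_poly_mu1 _ 0 (-1) 0 1 0 0 0 (fun t => by rw [he_eval1, he_eval2]; ring)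
  · exact integrable_poly_mu1 _ 1 0 (-2) 0 1 0 0 (fun t => by rw [he_eval2]; ring)
  · exact integrable_poly_mu1 _ 0 3 0 (-4) 0 1 0 (fun t => by rw [he_eval2, he_eval3]; ring)
  · exact integrable_poly_mu1 _ 0 (-3) 0 1 0 0 0 (fun t => by rw [he_eval0, he_eval3]; ring)
  · exact integrable_poly_mu1 _ 0 0 (-3) 0 1 0 0 (fun t => by rw [he_eval1, he_eval3]; ring)
  · exact integrable_poly_mu1 _ 0 3 0 (-4) 0 1 0 (fun t => by rw [he_eval2, he_eval3]; ring)
  · exact integrable_poly_mu1 _ 0 0 9 0 (-6) 0 1 (fun t => by rw [he_eval3]; ring)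

lemma he_integrable {j : ℕ} (hj : j ≤ 3) :
    Integrable (fun t : ℝ => (Polynomial.aeval t (Polynomial.hermite j) : ℝ)) (gaussianReal 0 1) := by
  have := he_mul_he_integrable hj (Nat.zero_le 3)
  apply this.congr
  filter_upwards with t
  rw [he_eval0, mul_one]

noncomputable def wind (C : ℝ) : ℝ → ℝ := (Set.Icc (-C) C).indicator (fun _ => (1:ℝ))

lemma wind_nonneg (C t : ℝ) : 0 ≤ wind C t := by
  unfold wind; by_cases h : t ∈ Set.Icc (-C) C <;> simp [h]

lemma wind_le_one (C t : ℝ) : wind C t ≤ 1 := by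
  unfold wind; by_cases h : t ∈ Set.Icc (-C) C <;> simp [h]

lemma wind_meas (C : ℝ) : Measurable (wind C) :=
  measurable_const.indicator measurableSet_Icc

lemma wind_mul_self (C t : ℝ) : wind C t * wind C t = wind C t := by
  unfold wind; by_cases h : t ∈ Set.Icc (-C) C <;> simp [h]

lemma wind_integrable (C : ℝ) : Integrable (wind C) (gaussianReal 0 1) := by
  unfold wind
  exact (integrable_const (1:ℝ)).indicator measurableSet_Icc

lemma wind_mul_integrable (C : ℝ) {f : ℝ → ℝ} (hf : Integrable f (gaussianReal 0 1)) :
    Integrable (fun t => wind C t * f t) (gaussianReal 0 1) :=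
  hf.bdd_mul (wind_meas C).aestronglyMeasurable
    (c := 1) (Filter.Eventually.of_forall fun t => by rw [Real.norm_eq_abs, abs_of_nonneg (wind_nonneg C t)]; exact wind_le_one C t)

lemma gphi_integrable : Integrable gphi := by
  apply ((integrable_pow_gaussfn 0).const_mul ((Real.sqrt (2 * π))⁻¹)).congr
  filter_upwards with x
  rw [gphi]; ring

lemma integral_gphi : ∫ x, gphi x = 1 := by
  have : ∫ x, gphi x = (Real.sqrt (2 * π))⁻¹ * ∫ x : ℝ, Real.exp (-(x ^ 2) / 2) := by
    rw [← integral_const_mul]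
    congr 1
  rw [this, gaussfn_int, inv_mul_cancel₀ (ne_of_gt sqrt2pi_pos)]

lemma gphi_even (x : ℝ) : gphi (-x) = gphi x := by
  unfold gphi; rw [neg_sq]

lemma gPhi_neg (C : ℝ) : gPhi (-C) = 1 - gPhi C := by
  have h1 : (∫ x in Set.Iic (-C), gphi x) + ∫ x in Set.Ioi (-C), gphi x = 1 := by
    rw [intervalIntegral.integral_Iic_add_Ioi gphi_integrable.integrableOn
      gphi_integrable.integrableOn, integral_gphi]
  have h2 : ∫ x in Set.Ioi (-C), gphi x = gPhi C := by
    rw [← integral_comp_neg_Iic C gphi, gPhi]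
    congr 1; ext x; rw [gphi_even]
  rw [gPhi, ← h2]
  linarith [h1]

lemma integral_wind (C : ℝ) (hC0 : 0 < C) :
    ∫ t, wind C t ∂(gaussianReal 0 1) = 2 * gPhi C - 1 := by
  rw [integral_gaussianReal_eq]
  have e1 : (fun x => gphi x * wind C x) = Set.indicator (Set.Icc (-C) C) gphi := by
    ext x
    unfold wind
    by_cases h : x ∈ Set.Icc (-C) C <;> simp [h]
  rw [e1, integral_indicator measurableSet_Icc]
  have hsplit : ∫ x in Set.Iic C, gphi x
      = (∫ x in Set.Iic (-C), gphi x) + ∫ x in Set.Ioc (-C) C, gphi x := by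
    rw [← setIntegral_union (Set.Iic_disjoint_Ioc le_rfl) measurableSet_Ioc
      gphi_integrable.integrableOn gphi_integrable.integrableOn,
      Set.Iic_union_Ioc_eq_Iic (by linarith : -C ≤ C)]
  have hIcc : ∫ x in Set.Icc (-C) C, gphi x = ∫ x in Set.Ioc (-C) C, gphi x :=
    integral_Icc_eq_integral_Ioc
  have hneg := gPhi_neg C
  simp only [gPhi] at hneg ⊢
  linarith [hsplit, hIcc, hneg]

lemma wind_he_sq_le (C : ℝ) (hC1 : C ≤ 1) {k : ℕ} (hk : k ≤ 3) (t : ℝ) :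
    wind C t * (Polynomial.aeval t (Polynomial.hermite k) * Polynomial.aeval t (Polynomial.hermite k) : ℝ)
      ≤ (Nat.factorial k : ℝ) * wind C t := by
  by_cases h : t ∈ Set.Icc (-C) C
  · have ht : t ^ 2 ≤ 1 := by
      obtain ⟨h1, h2⟩ := h
      nlinarith
    unfold wind
    simp only [Set.indicator_of_mem h, one_mul, mul_one]
    interval_cases k
    · rw [he_eval0]; norm_num [Nat.factorial]
    · rw [he_eval1]; norm_num [Nat.factorial]; nlinarith
    · rw [he_eval2]; norm_num [Nat.factorial]; nlinarith
    · rw [he_eval3]; norm_num [Nat.factorial]; nlinarith [sq_nonneg (t^2 - 1), sq_nonneg t, sq_nonneg (t*(t^2-1))]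
  · unfold wind
    simp [Set.indicator_of_notMem h]

lemma strip_he_sq (C : ℝ) (hC1 : C ≤ 1) {k : ℕ} (hk : k ≤ 3) :
    ∫ t, wind C t * (Polynomial.aeval t (Polynomial.hermite k)
        * Polynomial.aeval t (Polynomial.hermite k) : ℝ) ∂(gaussianReal 0 1)
      ≤ (Nat.factorial k : ℝ) * ∫ t, wind C t ∂(gaussianReal 0 1) := by
  rw [← integral_const_mul]
  apply integral_mono (wind_mul_integrable C (he_mul_he_integrable hk hk))
    ((wind_integrable C).const_mul _)
  exact wind_he_sq_le C hC1 hk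

section Multi

variable {n : ℕ}

instance gauss_prob (n : ℕ) : IsProbabilityMeasure (gauss n) := by
  unfold gauss; infer_instance

lemma gauss_integral_prod (n : ℕ) (f : Fin (n+1) → ℝ → ℝ) :
    ∫ x, ∏ i, f i (x i) ∂gauss n = ∏ i, ∫ t, f i t ∂(gaussianReal 0 1) := by
  letI : MeasureSpace ℝ := { volume := gaussianReal 0 1 }
  haveI : SigmaFinite (volume : Measure ℝ) := by
    show SigmaFinite (gaussianReal 0 1); infer_instance
  have hpi : gauss n = (volume : Measure (Fin (n+1) → ℝ)) := by
    rw [volume_pi]; rfl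
  rw [hpi]
  exact MeasureTheory.integral_fintype_prod_eq_prod f

lemma gauss_integrable_prod (n : ℕ) (f : Fin (n+1) → ℝ → ℝ)
    (hf : ∀ i, Integrable (f i) (gaussianReal 0 1)) :
    Integrable (fun x : Fin (n+1) → ℝ => ∏ i, f i (x i)) (gauss n) := by
  letI : MeasureSpace ℝ := { volume := gaussianReal 0 1 }
  haveI : SigmaFinite (volume : Measure ℝ) := by
    show SigmaFinite (gaussianReal 0 1); infer_instance
  have hpi : gauss n = (volume : Measure (Fin (n+1) → ℝ)) := by
    rw [volume_pi]; rfl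
  rw [hpi]
  exact MeasureTheory.Integrable.fintype_prod hf

lemma hermiteProd_meas {α : Fin (n+1) → ℕ} : Measurable (hermiteProd α) := by
  unfold hermiteProd
  apply Finset.measurable_prod
  intro i _
  exact (Polynomial.continuous_aeval _).measurable.comp (measurable_pi_apply i)

lemma hermiteProd_mul_eq (α β : Fin (n+1) → ℕ) (x : Fin (n+1) → ℝ) :
    hermiteProd α x * hermiteProd β x
      = ∏ i, (Polynomial.aeval (x i) (Polynomial.hermite (α i))
          * Polynomial.aeval (x i) (Polynomial.hermite (β i)) : ℝ) := by
  rw [hermiteProd, hermiteProd, ← Finset.prod_mul_distrib]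

lemma hermiteProd_mul_integrable {α β : Fin (n+1) → ℕ}
    (hα : ∀ i, α i ≤ 3) (hβ : ∀ i, β i ≤ 3) :
    Integrable (fun x => hermiteProd α x * hermiteProd β x) (gauss n) := by
  have := gauss_integrable_prod n
    (fun i t => (Polynomial.aeval t (Polynomial.hermite (α i))
      * Polynomial.aeval t (Polynomial.hermite (β i)) : ℝ))
    (fun i => he_mul_he_integrable (hα i) (hβ i))
  apply this.congr
  filter_upwards with x
  rw [hermiteProd_mul_eq]

lemma hermiteProd_integrable {α : Fin (n+1) → ℕ} (hα : ∀ i, α i ≤ 3) :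
    Integrable (hermiteProd α) (gauss n) := by
  have := gauss_integrable_prod n
    (fun i t => (Polynomial.aeval t (Polynomial.hermite (α i)) : ℝ))
    (fun i => he_integrable (hα i))
  exact this

lemma mfact_pos (α : Fin (n+1) → ℕ) : 0 < (mfact α : ℝ) := by
  have : 0 < mfact α := Finset.prod_pos (fun i _ => Nat.factorial_pos _)
  exact_mod_cast this

end Multi

section Main

variable {n : ℕ}

lemma strip_cross (C : ℝ) (α β : Fin (n+1) → ℕ) :
    ∫ x, wind C (x 0) * (hermiteProd α x * hermiteProd β x) ∂gauss n
      = ∏ i, ∫ t, (if i = (0 : Fin (n+1)) then wind C t else 1)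
          * (Polynomial.aeval t (Polynomial.hermite (α i))
            * Polynomial.aeval t (Polynomial.hermite (β i)) : ℝ) ∂(gaussianReal 0 1) := by
  rw [← gauss_integral_prod n (fun i t => (if i = (0 : Fin (n+1)) then wind C t else 1)
      * (Polynomial.aeval t (Polynomial.hermite (α i))
        * Polynomial.aeval t (Polynomial.hermite (β i)) : ℝ))]
  congr 1
  ext x
  rw [Finset.prod_mul_distrib, hermiteProd_mul_eq]
  congr 1
  rw [Finset.prod_ite_eq' Finset.univ (0 : Fin (n+1)) (fun i => wind C (x i))]
  simp

lemma strip_cross_ne (C : ℝ) {α β : Fin (n+1) → ℕ}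
    (hα : ∀ i, α i ≤ 3) (hβ : ∀ i, β i ≤ 3)
    (hsum : ∑ i, α i = ∑ i, β i) (hne : α ≠ β) :
    ∫ x, wind C (x 0) * (hermiteProd α x * hermiteProd β x) ∂gauss n = 0 := by
  rw [strip_cross]
  have hex : ∃ i, i ≠ (0 : Fin (n+1)) ∧ α i ≠ β i := by
    by_contra hcon
    push_neg at hcon
    have htail : ∀ i : Fin n, α i.succ = β i.succ := fun i => hcon i.succ (Fin.succ_ne_zero i)
    apply hne
    funext i
    rcases Fin.eq_zero_or_eq_succ i with h0 | ⟨j, rfl⟩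
    · subst h0
      have h1 := hsum
      rw [Fin.sum_univ_succ, Fin.sum_univ_succ] at h1
      have h2 : ∑ i : Fin n, α i.succ = ∑ i : Fin n, β i.succ :=
        Finset.sum_congr rfl (fun i _ => htail i)
      omega
    · exact htail j
  obtain ⟨i, hi0, hiab⟩ := hex
  apply Finset.prod_eq_zero (Finset.mem_univ i)
  simp only [if_neg hi0, one_mul]
  rw [he_mul_he_integral (hα i) (hβ i), if_neg hiab]

lemma strip_cross_diag (C : ℝ) (hC1 : C ≤ 1) {α : Fin (n+1) → ℕ} (hα : ∀ i, α i ≤ 3) :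
    ∫ x, wind C (x 0) * (hermiteProd α x * hermiteProd α x) ∂gauss n
      ≤ (mfact α : ℝ) * ∫ t, wind C t ∂(gaussianReal 0 1) := by
  rw [strip_cross]
  rw [Fin.prod_univ_succ]
  simp only [if_pos rfl]
  have htail : ∀ i : Fin n, ∫ t, (if i.succ = (0 : Fin (n+1)) then wind C t else 1)
      * (Polynomial.aeval t (Polynomial.hermite (α i.succ))
        * Polynomial.aeval t (Polynomial.hermite (α i.succ)) : ℝ) ∂(gaussianReal 0 1)
      = ((α i.succ).factorial : ℝ) := by
    intro i
    have e : ∀ t : ℝ, (if i.succ = (0 : Fin (n+1)) then wind C t else 1)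
        * (Polynomial.aeval t (Polynomial.hermite (α i.succ))
          * Polynomial.aeval t (Polynomial.hermite (α i.succ)) : ℝ)
        = Polynomial.aeval t (Polynomial.hermite (α i.succ))
          * Polynomial.aeval t (Polynomial.hermite (α i.succ)) := by
      intro t
      rw [if_neg (Fin.succ_ne_zero i), one_mul]
    simp only [e]
    rw [he_mul_he_integral (hα i.succ) (hα i.succ), if_pos rfl]
  rw [Finset.prod_congr rfl (fun i _ => htail i)]
  have hmf : (mfact α : ℝ) = ((α 0).factorial : ℝ) * ∏ i : Fin n, ((α i.succ).factorial : ℝ) := by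
    rw [mfact, Nat.cast_prod, Fin.prod_univ_succ]
  rw [hmf]
  have h0 : ∫ t, wind C t * (Polynomial.aeval t (Polynomial.hermite (α 0))
      * Polynomial.aeval t (Polynomial.hermite (α 0)) : ℝ) ∂(gaussianReal 0 1)
      ≤ ((α 0).factorial : ℝ) * ∫ t, wind C t ∂(gaussianReal 0 1) :=
    strip_he_sq C hC1 (hα 0)
  have hprodnn : (0:ℝ) ≤ ∏ i : Fin n, ((α i.succ).factorial : ℝ) :=
    Finset.prod_nonneg (fun i _ => by positivity)
  calc (∫ t, wind C t * (Polynomial.aeval t (Polynomial.hermite (α 0))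
        * Polynomial.aeval t (Polynomial.hermite (α 0)) : ℝ) ∂(gaussianReal 0 1))
        * ∏ i : Fin n, ((α i.succ).factorial : ℝ)
      ≤ (((α 0).factorial : ℝ) * ∫ t, wind C t ∂(gaussianReal 0 1))
        * ∏ i : Fin n, ((α i.succ).factorial : ℝ) := by
        exact mul_le_mul_of_nonneg_right h0 hprodnn
    _ = ((α 0).factorial : ℝ) * (∏ i : Fin n, ((α i.succ).factorial : ℝ))
        * ∫ t, wind C t ∂(gaussianReal 0 1) := by ring

end Main


/-- The degree-3 Hermite weight of a bounded function supported on the strip `|x₁| ≤ C`. -/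
theorem strip_function_he3_bound (n : ℕ) (C : ℝ) (hC0 : 0 < C) (hC1 : C ≤ 1)
    (h : (Fin (n + 1) → ℝ) → ℝ) (hmeas : Measurable h)
    (hbdd : ∃ M : ℝ, ∀ x, |h x| ≤ M)
    (hsupp : ∀ x, C < |x 0| → h x = 0) :
    ∑ α ∈ Finset.Nat.antidiagonalTuple (n + 1) 3,
        (mfact α : ℝ)⁻¹ * (∫ x, h x * hermiteProd α x ∂gauss n) ^ 2
      ≤ (∫ x, h x ^ 2 ∂gauss n) * (2 * gPhi C - 1) := by
  obtain ⟨M, hM⟩ := hbdd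
  suffices H : ∀ c : (Fin (n+1) → ℕ) → ℝ,
      (∀ α, c α = ∫ x, h x * hermiteProd α x ∂gauss n) →
      ∑ α ∈ Finset.Nat.antidiagonalTuple (n + 1) 3, (mfact α : ℝ)⁻¹ * (c α) ^ 2
        ≤ (∫ x, h x ^ 2 ∂gauss n) * (2 * gPhi C - 1) by
    exact H _ (fun _ => rfl)
  intro c hcdef
  set I := Finset.Nat.antidiagonalTuple (n + 1) 3 with hI
  have hmem : ∀ {α : Fin (n+1) → ℕ}, α ∈ I → ∀ i, α i ≤ 3 := by
    intro α hα i
    rw [hI, Finset.Nat.mem_antidiagonalTuple] at hα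
    calc α i ≤ ∑ j, α j := Finset.single_le_sum (fun j _ => Nat.zero_le _) (Finset.mem_univ i)
      _ = 3 := hα
  have hsum3 : ∀ {α : Fin (n+1) → ℕ}, α ∈ I → ∑ i, α i = 3 := by
    intro α hα
    rw [hI, Finset.Nat.mem_antidiagonalTuple] at hα
    exact hα
  set P : (Fin (n+1) → ℝ) → ℝ := fun x => ∑ α ∈ I, (c α / (mfact α : ℝ)) * hermiteProd α x
    with hPdef
  set W : (Fin (n+1) → ℝ) → ℝ := fun x => wind C (x 0) with hWdef
  have hPmeas : Measurable P := by
    rw [hPdef]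
    apply Finset.measurable_sum
    intro α _
    exact hermiteProd_meas.const_mul _
  have hWmeas : Measurable W := (wind_meas C).comp (measurable_pi_apply 0)
  set A := ∫ x, h x ^ 2 ∂gauss n with hA
  set s := ∫ t, wind C t ∂(gaussianReal 0 1) with hsdef
  set L := ∑ α ∈ I, (mfact α : ℝ)⁻¹ * (c α) ^ 2 with hLdef
  -- basic nonnegativity
  have hAnn : 0 ≤ A := by
    rw [hA]; exact integral_nonneg (fun x => sq_nonneg _)
  have hsnn : 0 ≤ s := by
    rw [hsdef]; exact integral_nonneg (fun t => wind_nonneg C t)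
  have hLnn : 0 ≤ L := by
    rw [hLdef]
    apply Finset.sum_nonneg
    intro α _
    have := mfact_pos α
    positivity
  -- integrability facts
  have h_int_hHe : ∀ α ∈ I, Integrable (fun x => h x * hermiteProd α x) (gauss n) := by
    intro α hα
    exact (hermiteProd_integrable (hmem hα)).bdd_mul hmeas.aestronglyMeasurable
      (c := M) (Filter.Eventually.of_forall fun x => by rw [Real.norm_eq_abs]; exact hM x)
  have hHeHe_int : ∀ α ∈ I, ∀ β ∈ I,
      Integrable (fun x => hermiteProd α x * hermiteProd β x) (gauss n) := by
    intro α hα β hβ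
    exact hermiteProd_mul_integrable (hmem hα) (hmem hβ)
  have hWb : ∃ Cb : ℝ, ∀ x : Fin (n+1) → ℝ, ‖W x‖ ≤ Cb := by
    refine ⟨1, fun x => ?_⟩
    rw [Real.norm_eq_abs, abs_of_nonneg (wind_nonneg C (x 0))]
    exact wind_le_one C (x 0)
  have hWHeHe_int : ∀ α ∈ I, ∀ β ∈ I,
      Integrable (fun x => W x * (hermiteProd α x * hermiteProd β x)) (gauss n) := by
    intro α hα β hβ
    exact (hHeHe_int α hα β hβ).bdd_mul hWmeas.aestronglyMeasurable (Filter.Eventually.of_forall hWb.choose_spec)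
  -- Step 1 : ∫ h·P = L
  have step1 : ∫ x, h x * P x ∂gauss n = L := by
    have e : ∀ x, h x * P x
        = ∑ α ∈ I, (c α / (mfact α : ℝ)) * (h x * hermiteProd α x) := by
      intro x
      rw [hPdef, Finset.mul_sum]
      exact Finset.sum_congr rfl (fun α _ => by ring)
    simp only [e]
    rw [integral_finset_sum _ (fun α hα => ((h_int_hHe α hα).const_mul _)), hLdef]
    apply Finset.sum_congr rfl
    intro α hα
    rw [integral_const_mul, ← hcdef α, div_eq_mul_inv]
    ring
  -- Step 2 : insert the strip weight
  have step2 : ∫ x, h x * P x ∂gauss n = ∫ x, h x * (W x * P x) ∂gauss n := by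
    congr 1
    ext x
    rcases le_or_gt (|x 0|) C with hx | hx
    · have hw : W x = 1 := by
        rw [hWdef]
        have : x 0 ∈ Set.Icc (-C) C := by
          obtain ⟨h1, h2⟩ := abs_le.mp hx
          exact ⟨h1, h2⟩
        simp [wind, Set.indicator_of_mem this]
      rw [hw, one_mul]
    · rw [hsupp x hx, zero_mul, zero_mul]
  -- Expansion of the weighted square
  have hPP_expand : ∀ x, W x * (P x * P x)
      = ∑ α ∈ I, ∑ β ∈ I, (c α / (mfact α : ℝ)) * (c β / (mfact β : ℝ))
          * (W x * (hermiteProd α x * hermiteProd β x)) := by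
    intro x
    rw [hPdef]
    simp only [Finset.sum_mul, Finset.mul_sum]
    apply Finset.sum_congr rfl
    intro α _
    apply Finset.sum_congr rfl
    intro β _
    ring
  have hq_int2 : Integrable (fun x => W x * (P x * P x)) (gauss n) := by
    have := integrable_finset_sum (μ := gauss n) I
      (f := fun α (x : Fin (n+1) → ℝ) => ∑ β ∈ I, (c α / (mfact α : ℝ)) * (c β / (mfact β : ℝ))
          * (W x * (hermiteProd α x * hermiteProd β x)))
      (fun α hα => integrable_finset_sum I
        (fun β hβ => by
          have := (hWHeHe_int α hα β hβ).const_mul ((c α / (mfact α : ℝ)) * (c β / (mfact β : ℝ)))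
          apply this.congr
          filter_upwards with x
          ring))
    apply this.congr
    filter_upwards with x
    rw [hPP_expand x]
  -- Step 3 : ∫ W·P² ≤ s·L
  have step3 : ∫ x, W x * (P x * P x) ∂gauss n ≤ s * L := by
    have e1 : ∫ x, W x * (P x * P x) ∂gauss n
        = ∑ α ∈ I, ∑ β ∈ I, (c α / (mfact α : ℝ)) * (c β / (mfact β : ℝ))
            * ∫ x, W x * (hermiteProd α x * hermiteProd β x) ∂gauss n := by
      simp only [hPP_expand]
      rw [integral_finset_sum _ (fun α hα => integrable_finset_sum I
        (fun β hβ => by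
          have := (hWHeHe_int α hα β hβ).const_mul ((c α / (mfact α : ℝ)) * (c β / (mfact β : ℝ)))
          apply this.congr
          filter_upwards with x
          ring))]
      apply Finset.sum_congr rfl
      intro α hα
      rw [integral_finset_sum _ (fun β hβ => by
          have := (hWHeHe_int α hα β hβ).const_mul ((c α / (mfact α : ℝ)) * (c β / (mfact β : ℝ)))
          apply this.congr
          filter_upwards with x
          ring)]
      apply Finset.sum_congr rfl
      intro β hβ
      rw [← integral_const_mul]
    rw [e1]
    have e2 : ∀ α ∈ I, ∑ β ∈ I, (c α / (mfact α : ℝ)) * (c β / (mfact β : ℝ))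
        * ∫ x, W x * (hermiteProd α x * hermiteProd β x) ∂gauss n
        = (c α / (mfact α : ℝ)) * (c α / (mfact α : ℝ))
            * ∫ x, W x * (hermiteProd α x * hermiteProd α x) ∂gauss n := by
      intro α hα
      apply Finset.sum_eq_single_of_mem α hα
      intro β hβ hne
      have hz : ∫ x, W x * (hermiteProd α x * hermiteProd β x) ∂gauss n = 0 := by
        rw [hWdef]
        exact strip_cross_ne C (hmem hα) (hmem hβ)
          (by rw [hsum3 hα, hsum3 hβ]) (Ne.symm hne)
      rw [hz, mul_zero]
    rw [Finset.sum_congr rfl e2]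
    have e3 : ∀ α ∈ I, (c α / (mfact α : ℝ)) * (c α / (mfact α : ℝ))
        * ∫ x, W x * (hermiteProd α x * hermiteProd α x) ∂gauss n
        ≤ s * ((mfact α : ℝ)⁻¹ * (c α)^2) := by
      intro α hα
      have hT : ∫ x, W x * (hermiteProd α x * hermiteProd α x) ∂gauss n ≤ (mfact α : ℝ) * s := by
        rw [hWdef, hsdef]
        exact strip_cross_diag C hC1 (hmem hα)
      have hcoef : 0 ≤ (c α / (mfact α : ℝ)) * (c α / (mfact α : ℝ)) := mul_self_nonneg _
      calc (c α / (mfact α : ℝ)) * (c α / (mfact α : ℝ))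
            * ∫ x, W x * (hermiteProd α x * hermiteProd α x) ∂gauss n
          ≤ (c α / (mfact α : ℝ)) * (c α / (mfact α : ℝ)) * ((mfact α : ℝ) * s) :=
            mul_le_mul_of_nonneg_left hT hcoef
        _ = s * ((mfact α : ℝ)⁻¹ * (c α)^2) := by
            have hm := mfact_pos α
            field_simp
    calc ∑ α ∈ I, ((c α / (mfact α : ℝ)) * (c α / (mfact α : ℝ))
          * ∫ x, W x * (hermiteProd α x * hermiteProd α x) ∂gauss n)
        ≤ ∑ α ∈ I, s * ((mfact α : ℝ)⁻¹ * (c α)^2) := Finset.sum_le_sum e3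
      _ = s * L := by rw [hLdef, Finset.mul_sum]
  -- Cauchy–Schwarz
  have hMemh : MemLp h (ENNReal.ofReal 2) (gauss n) :=
    MemLp.of_bound hmeas.aestronglyMeasurable M
      (Filter.Eventually.of_forall (fun x => by rw [Real.norm_eq_abs]; exact hM x))
  have hq_meas : AEStronglyMeasurable (fun x => W x * P x) (gauss n) :=
    (hWmeas.mul hPmeas).aestronglyMeasurable
  have hMemq : MemLp (fun x => W x * P x) (ENNReal.ofReal 2) (gauss n) := by
    rw [show ENNReal.ofReal (2:ℝ) = 2 by norm_num]
    rw [memLp_two_iff_integrable_sq hq_meas]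
    apply hq_int2.congr
    filter_upwards with x
    rw [hWdef]
    have := wind_mul_self C (x 0)
    nlinarith [this]
  have CS : (∫ x, h x * (W x * P x) ∂gauss n) ^ 2
      ≤ A * ∫ x, W x * (P x * P x) ∂gauss n := by
    set B := ∫ x, W x * (P x * P x) ∂gauss n with hB
    have hBnn : 0 ≤ B := by
      rw [hB]
      apply integral_nonneg
      intro x
      exact mul_nonneg (wind_nonneg C (x 0)) (mul_self_nonneg _)
    have h1 : |∫ x, h x * (W x * P x) ∂gauss n| ≤ ∫ x, ‖h x‖ * ‖W x * P x‖ ∂gauss n := by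
      have := norm_integral_le_integral_norm (μ := gauss n) (fun x => h x * (W x * P x))
      rw [Real.norm_eq_abs] at this
      apply this.trans_eq
      congr 1
      ext x
      rw [norm_mul]
    have hpq : (2:ℝ).HolderConjugate 2 := ⟨by norm_num, by norm_num, by norm_num⟩
    have h2 := integral_mul_norm_le_Lp_mul_Lq hpq hMemh hMemq
    have e1 : ∫ x, ‖h x‖ ^ (2:ℝ) ∂gauss n = A := by
      rw [hA]
      congr 1
      ext x
      rw [show ((2:ℝ)) = ((2:ℕ):ℝ) by norm_num, Real.rpow_natCast, Real.norm_eq_abs, sq_abs]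
    have e2 : ∫ x, ‖W x * P x‖ ^ (2:ℝ) ∂gauss n = B := by
      rw [hB]
      congr 1
      ext x
      rw [show ((2:ℝ)) = ((2:ℕ):ℝ) by norm_num, Real.rpow_natCast, Real.norm_eq_abs, sq_abs]
      rw [hWdef]
      have := wind_mul_self C (x 0)
      nlinarith [this]
    rw [e1, e2] at h2
    have h3 : |∫ x, h x * (W x * P x) ∂gauss n| ≤ A ^ ((1:ℝ)/2) * B ^ ((1:ℝ)/2) :=
      h1.trans h2
    have h4 : (A ^ ((1:ℝ)/2) * B ^ ((1:ℝ)/2)) ^ 2 = A * B := by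
      rw [mul_pow, ← Real.rpow_natCast (A ^ ((1:ℝ)/2)) 2, ← Real.rpow_natCast (B ^ ((1:ℝ)/2)) 2,
        ← Real.rpow_mul hAnn, ← Real.rpow_mul hBnn]
      norm_num
    calc (∫ x, h x * (W x * P x) ∂gauss n) ^ 2
        = |∫ x, h x * (W x * P x) ∂gauss n| ^ 2 := (sq_abs _).symm
      _ ≤ (A ^ ((1:ℝ)/2) * B ^ ((1:ℝ)/2)) ^ 2 := by
          apply pow_le_pow_left₀ (abs_nonneg _) h3
      _ = A * B := h4
  -- combine
  have key : L ^ 2 ≤ A * (s * L) := by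
    calc L ^ 2 = (∫ x, h x * P x ∂gauss n) ^ 2 := by rw [step1]
      _ = (∫ x, h x * (W x * P x) ∂gauss n) ^ 2 := by rw [step2]
      _ ≤ A * ∫ x, W x * (P x * P x) ∂gauss n := CS
      _ ≤ A * (s * L) := by
          apply mul_le_mul_of_nonneg_left step3 hAnn
  have hfinal : L ≤ A * s := by
    rcases eq_or_lt_of_le hLnn with hL0 | hL0
    · rw [← hL0]
      positivity
    · have h5 : L * L ≤ (A * s) * L := by nlinarith [key]
      exact le_of_mul_le_mul_right h5 hL0
  have hs2 : s = 2 * gPhi C - 1 := by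
    rw [hsdef]
    exact integral_wind C hC0
  rw [← hs2]
  exact hfinal
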